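/- On the 5-dimensional nilpotent Lie algebra g = ℝ⁵ with the standard inner product, the function f₃(x) = x₄²(x₁ - x₅) - x₂x₃x₄ + ⅓x₃³ is invariant under the transadjoint action: its gradient ∇f₃(x) = x₄²e₁ - x₃x₄e₂ + (x₃² - x₂x₄)e₃ + (2(x₁-x₅)x₄ - x₂x₃)e₄ - x₄²e₅ satisfies ad^t_{∇f₃(x)} x = 0 for all x ∈ ℝ⁵. -/
import Mathlib


/-- The transadjoint action `ad^t_X Y` on the 5-dimensional nilpotent Lie algebra with
brackets `[e₁,e₂]=e₃`, `[e₁,e₃]=e₄`, `[e₅,e₁]=e₂`, `[e₅,e₂]=e₃`, `[e₅,e₃]=e₄`,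
with respect to the standard inner product on `ℝ⁵`. -/
def adt5 (X Y : Fin 5 → ℝ) : Fin 5 → ℝ :=
  ![X 4 * Y 1 - X 2 * Y 3 - X 1 * Y 2,
    (X 0 + X 4) * Y 2,
    (X 0 + X 4) * Y 3,
    0,
    -(X 0 * Y 1 + X 2 * Y 3 + X 1 * Y 2)]

/-- `f₃(x) = x₄²(x₁ - x₅) - x₂x₃x₄ + ⅓x₃³`. -/
noncomputable def f3fun (x : Fin 5 → ℝ) : ℝ :=
  x 3 ^ 2 * (x 0 - x 4) - x 1 * x 2 * x 3 + x 2 ^ 3 / 3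

/-- `∇f₃(x) = x₄²e₁ - x₃x₄e₂ + (x₃² - x₂x₄)e₃ + (2(x₁-x₅)x₄ - x₂x₃)e₄ - x₄²e₅`. -/
def gradf3 (x : Fin 5 → ℝ) : Fin 5 → ℝ :=
  ![x 3 ^ 2, -(x 2 * x 3), x 2 ^ 2 - x 1 * x 3, 2 * (x 0 - x 4) * x 3 - x 1 * x 2,
    -(x 3 ^ 2)]

/-- `gradf3` is the gradient of `f₃` with respect to the standard inner product, and
`f₃` is invariant under the transadjoint action: `ad^t_{∇f₃(x)} x = 0` for all `x`. -/
theorem stmt_14 : ∀ x : Fin 5 → ℝ,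
    (∀ y : Fin 5 → ℝ, ∑ i, gradf3 x i * y i = fderiv ℝ f3fun x y) ∧
    adt5 (gradf3 x) x = 0 := by
  intro x
  constructor
  · intro y
    have hp : ∀ i : Fin 5, HasFDerivAt (fun x : Fin 5 → ℝ => x i)
        (ContinuousLinearMap.proj i : (Fin 5 → ℝ) →L[ℝ] ℝ) x := fun i =>
      hasFDerivAt_apply i x
    have hsq : HasFDerivAt (fun x : Fin 5 → ℝ => x 3 ^ 2)
        ((x 3) • (ContinuousLinearMap.proj 3 : (Fin 5 → ℝ) →L[ℝ] ℝ)
          + (x 3) • ContinuousLinearMap.proj 3) x := by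
      simp only [pow_two]; exact (hp 3).mul (hp 3)
    have hcube : HasFDerivAt (fun x : Fin 5 → ℝ => x 2 ^ 3)
        ((x 2 * x 2) • (ContinuousLinearMap.proj 2 : (Fin 5 → ℝ) →L[ℝ] ℝ)
          + x 2 • (x 2 • (ContinuousLinearMap.proj 2 : (Fin 5 → ℝ) →L[ℝ] ℝ)
            + x 2 • ContinuousLinearMap.proj 2)) x := by
      simp only [pow_succ, pow_zero, one_mul]; exact ((hp 2).mul (hp 2)).mul (hp 2)
    have hcube3 : HasFDerivAt (fun x : Fin 5 → ℝ => x 2 ^ 3 / 3)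
        ((3:ℝ)⁻¹ • ((x 2 * x 2) • (ContinuousLinearMap.proj 2 : (Fin 5 → ℝ) →L[ℝ] ℝ)
          + x 2 • (x 2 • (ContinuousLinearMap.proj 2 : (Fin 5 → ℝ) →L[ℝ] ℝ)
            + x 2 • ContinuousLinearMap.proj 2))) x := by
      simp only [div_eq_mul_inv]; exact hcube.mul_const _
    have h := ((hsq.mul ((hp 0).sub (hp 4))).sub
        (((hp 1).mul (hp 2)).mul (hp 3))).add hcube3
    have h' : HasFDerivAt f3fun _ x := h
    rw [h'.fderiv]
    simp [gradf3, Fin.sum_univ_five]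
    ring
  · funext i
    fin_cases i <;> simp [adt5, gradf3] <;> ring
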